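/- Assume m ≥ 2, |y_j| ≤ C_y and ‖φ_j‖ ≤ κ for all 1 ≤ j ≤ n, and set C = 2·(C_y + κ·(C_y²/λ)^{1/m}). Then the minimizers on the full and leave-one-out data satisfy the distance bound ‖f_Z − f_{Z^i}‖ ≤ (2^{m−2}·C·κ/(λ·n))^{1/(m−1)}. -/

import Mathlib

open scoped RealInnerProductSpace

/-!
Both minimizers are compared with their midpoint `h = (fZ + fZi) / 2`. The two objectives differ
only in the `i`-th squared residual, so adding the optimality inequalities of `fZ` and `fZi` at
`h`, and using the convexity of the squared loss together with Clarkson's inequality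
`‖(a + b) / 2‖ ^ m + ‖(a - b) / 2‖ ^ m ≤ (‖a‖ ^ m + ‖b‖ ^ m) / 2` (valid for `m ≥ 2`), leaves
`λ ‖fZ - fZi‖ ^ m ≤ 2 ^ (m - 2) / n · (r_i(fZi)² - r_i(fZ)²)`. Comparing each minimizer with `0`
bounds its norm by `(C_y² / λ) ^ (1 / m)`, hence both residuals by `C / 2`, and the difference of
squares factors as `⟪φ_i, fZ - fZi⟫ · (r_i(fZ) + r_i(fZi)) ≤ C κ ‖fZ - fZi‖`. Dividing by
`‖fZ - fZi‖` gives the bound.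
-/

/-- Write `‖x‖ ^ m = (‖x‖ ^ 2) ^ (m / 2)`: the parallelogram law handles the squares, and
`t ↦ t ^ (m / 2)` is superadditive and convex. -/
theorem norm_half_smul_add_rpow_add_norm_half_smul_sub_rpow_le {H : Type*}
    [NormedAddCommGroup H] [InnerProductSpace ℝ H] {m : ℝ} (hm : 2 ≤ m) (a b : H) :
    ‖(1 / 2 : ℝ) • (a + b)‖ ^ m + ‖(1 / 2 : ℝ) • (a - b)‖ ^ m ≤ (‖a‖ ^ m + ‖b‖ ^ m) / 2 := by
  set p := m / 2 with hp_def
  have hp : 1 ≤ p := by rw [hp_def]; linarith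
  have hpow : ∀ x : H, ‖x‖ ^ m = (‖x‖ ^ 2) ^ p := fun x => by
    rw [← Real.rpow_natCast, ← Real.rpow_mul (norm_nonneg x), hp_def, Nat.cast_ofNat,
      mul_div_cancel₀ m two_ne_zero]
  have hpar : ‖(1 / 2 : ℝ) • (a + b)‖ ^ 2 + ‖(1 / 2 : ℝ) • (a - b)‖ ^ 2
      = (‖a‖ ^ 2 + ‖b‖ ^ 2) / 2 := by
    have := parallelogram_law_with_norm ℝ a b
    simp only [norm_smul, Real.norm_eq_abs, abs_div, abs_one, abs_two]
    linarith
  have hmid : ∀ u v : ℝ, 0 ≤ u → 0 ≤ v → ((u + v) / 2) ^ p ≤ (u ^ p + v ^ p) / 2 :=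
    fun u v hu hv => by
      have := (convexOn_rpow hp).2 hu hv (by norm_num : (0 : ℝ) ≤ 1 / 2)
        (by norm_num : (0 : ℝ) ≤ 1 / 2) (by norm_num)
      simp only [smul_eq_mul] at this
      calc ((u + v) / 2) ^ p = (1 / 2 * u + 1 / 2 * v) ^ p := by ring_nf
        _ ≤ 1 / 2 * u ^ p + 1 / 2 * v ^ p := this
        _ = (u ^ p + v ^ p) / 2 := by ring
  calc ‖(1 / 2 : ℝ) • (a + b)‖ ^ m + ‖(1 / 2 : ℝ) • (a - b)‖ ^ m
      = (‖(1 / 2 : ℝ) • (a + b)‖ ^ 2) ^ p + (‖(1 / 2 : ℝ) • (a - b)‖ ^ 2) ^ p := by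
        rw [hpow, hpow]
    _ ≤ (‖(1 / 2 : ℝ) • (a + b)‖ ^ 2 + ‖(1 / 2 : ℝ) • (a - b)‖ ^ 2) ^ p :=
        Real.add_rpow_le_rpow_add (by positivity) (by positivity) hp
    _ = ((‖a‖ ^ 2 + ‖b‖ ^ 2) / 2) ^ p := by rw [hpar]
    _ ≤ ((‖a‖ ^ 2) ^ p + (‖b‖ ^ 2) ^ p) / 2 := hmid _ _ (by positivity) (by positivity)
    _ = (‖a‖ ^ m + ‖b‖ ^ m) / 2 := by rw [hpow, hpow]

lemma le_rpow_one_div_of_mul_rpow_le {x c lam m : ℝ} (hx : 0 ≤ x) (hlam : 0 < lam) (hm : 0 < m)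
    (h : lam * x ^ m ≤ c) : x ≤ (c / lam) ^ (1 / m) := by
  have hxm : x ^ m ≤ c / lam := by rwa [le_div_iff₀' hlam]
  rw [one_div, Real.le_rpow_inv_iff_of_pos hx ((Real.rpow_nonneg hx m).trans hxm) hm]
  exact hxm

lemma le_rpow_one_div_sub_one_of_mul_rpow_le {x c K m : ℝ} (hx : 0 ≤ x) (hK : 0 < K)
    (hm : 1 < m) (hc : 0 ≤ c) (h : K * x ^ m ≤ c * x) : x ≤ (c / K) ^ (1 / (m - 1)) := by
  rcases hx.eq_or_lt with rfl | hx
  · exact Real.rpow_nonneg (div_nonneg hc hK.le) _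
  refine le_rpow_one_div_of_mul_rpow_le hx.le hK (sub_pos.2 hm) ?_
  rwa [Real.rpow_sub_one hx.ne', mul_div_assoc', div_le_iff₀ hx]

lemma one_div_mul_sum_sq_le {n : ℕ} {y : Fin n → ℝ} {Cy : ℝ} (hy : ∀ j, |y j| ≤ Cy)
    (s : Finset (Fin n)) : 1 / (n : ℝ) * ∑ j ∈ s, y j ^ 2 ≤ Cy ^ 2 := by
  rcases n.eq_zero_or_pos with rfl | hn
  · simp only [Nat.cast_zero, div_zero, zero_mul]; positivity
  have hsum : ∑ j ∈ s, y j ^ 2 ≤ n * Cy ^ 2 :=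
    calc ∑ j ∈ s, y j ^ 2 ≤ ∑ j, y j ^ 2 :=
          Finset.sum_le_sum_of_subset_of_nonneg s.subset_univ fun _ _ _ => sq_nonneg _
      _ ≤ ∑ _j : Fin n, Cy ^ 2 := Finset.sum_le_sum fun j _ =>
          sq_le_sq' (abs_le.1 (hy j)).1 (abs_le.1 (hy j)).2
      _ = n * Cy ^ 2 := by simp
  rw [one_div_mul_eq_div, div_le_iff₀' (by positivity)]
  exact hsum

section Residual

variable {H : Type*} [NormedAddCommGroup H] [InnerProductSpace ℝ H]
  {φ : H} {y Cy κ R : ℝ}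

lemma abs_sub_inner_le (hy : |y| ≤ Cy) (hφ : ‖φ‖ ≤ κ) {f : H} (hf : ‖f‖ ≤ R) :
    |y - ⟪φ, f⟫| ≤ Cy + κ * R :=
  calc |y - ⟪φ, f⟫| ≤ |y| + |⟪φ, f⟫| := abs_sub _ _
    _ ≤ Cy + ‖φ‖ * ‖f‖ := add_le_add hy (abs_real_inner_le_norm φ f)
    _ ≤ Cy + κ * R := by gcongr; exact (norm_nonneg φ).trans hφ

lemma sq_sub_inner_sub_sq_sub_inner_le (hy : |y| ≤ Cy) (hφ : ‖φ‖ ≤ κ) {f g : H}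
    (hf : ‖f‖ ≤ R) (hg : ‖g‖ ≤ R) :
    (y - ⟪φ, g⟫) ^ 2 - (y - ⟪φ, f⟫) ^ 2 ≤ 2 * (Cy + κ * R) * κ * ‖f - g‖ := by
  have hfactor : (y - ⟪φ, g⟫) ^ 2 - (y - ⟪φ, f⟫) ^ 2
      = ⟪φ, f - g⟫ * ((y - ⟪φ, f⟫) + (y - ⟪φ, g⟫)) := by
    rw [inner_sub_right]; ring
  have hsum : |(y - ⟪φ, f⟫) + (y - ⟪φ, g⟫)| ≤ 2 * (Cy + κ * R) := by
    linarith [abs_add_le (y - ⟪φ, f⟫) (y - ⟪φ, g⟫), abs_sub_inner_le hy hφ hf,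
      abs_sub_inner_le hy hφ hg]
  have hinner : |⟪φ, f - g⟫| ≤ κ * ‖f - g‖ :=
    (abs_real_inner_le_norm φ _).trans (by gcongr)
  calc (y - ⟪φ, g⟫) ^ 2 - (y - ⟪φ, f⟫) ^ 2
      ≤ |⟪φ, f - g⟫| * |(y - ⟪φ, f⟫) + (y - ⟪φ, g⟫)| := by
        rw [hfactor, ← abs_mul]; exact le_abs_self _
    _ ≤ κ * ‖f - g‖ * (2 * (Cy + κ * R)) := by gcongr; exact (abs_nonneg _).trans hinner
    _ = 2 * (Cy + κ * R) * κ * ‖f - g‖ := by ring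

end Residual

section Objective

variable {H ι : Type*} [NormedAddCommGroup H] [InnerProductSpace ℝ H]
  (s : Finset ι) (φ : ι → H) (y : ι → ℝ)

def sqResidualSum (f : H) : ℝ :=
  ∑ j ∈ s, (y j - ⟪φ j, f⟫) ^ 2

noncomputable def regularizedObjective (ν lam m : ℝ) (f : H) : ℝ :=
  ν * sqResidualSum s φ y f + lam * ‖f‖ ^ m

variable {s φ y}

lemma sqResidualSum_nonneg (f : H) : 0 ≤ sqResidualSum s φ y f :=
  Finset.sum_nonneg fun _ _ => sq_nonneg _

lemma sqResidualSum_zero : sqResidualSum s φ y 0 = ∑ j ∈ s, y j ^ 2 := by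
  simp [sqResidualSum]

lemma sqResidualSum_half_smul_add_le (f g : H) :
    sqResidualSum s φ y ((1 / 2 : ℝ) • (f + g)) ≤
      (sqResidualSum s φ y f + sqResidualSum s φ y g) / 2 := by
  rw [sqResidualSum, sqResidualSum, sqResidualSum, ← Finset.sum_add_distrib, Finset.sum_div]
  refine Finset.sum_le_sum fun j _ => ?_
  rw [real_inner_smul_right, inner_add_right]
  nlinarith [sq_nonneg (⟪φ j, f⟫ - ⟪φ j, g⟫)]

lemma sqResidualSum_eq_add_sqResidualSum_erase [DecidableEq ι] {i : ι} (hi : i ∈ s) (f : H) :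
    sqResidualSum s φ y f = (y i - ⟪φ i, f⟫) ^ 2 + sqResidualSum (s.erase i) φ y f :=
  (Finset.add_sum_erase s _ hi).symm

lemma mul_rpow_norm_le_of_isMinOn {ν lam m : ℝ} (hν : 0 ≤ ν) (hm : m ≠ 0) {f : H}
    (hf : IsMinOn (regularizedObjective s φ y ν lam m) Set.univ f) :
    lam * ‖f‖ ^ m ≤ ν * ∑ j ∈ s, y j ^ 2 := by
  have h0 := isMinOn_univ_iff.1 hf 0
  rw [regularizedObjective, regularizedObjective, sqResidualSum_zero, norm_zero,
    Real.zero_rpow hm, mul_zero, add_zero] at h0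
  nlinarith [mul_nonneg hν (sqResidualSum_nonneg (s := s) (φ := φ) (y := y) f)]

theorem mul_norm_sub_rpow_le_of_isMinOn [DecidableEq ι] {i : ι} (hi : i ∈ s)
    {ν lam m : ℝ} (hν : 0 ≤ ν) (hlam : 0 ≤ lam) (hm : 2 ≤ m) {f g : H}
    (hf : IsMinOn (regularizedObjective s φ y ν lam m) Set.univ f)
    (hg : IsMinOn (regularizedObjective (s.erase i) φ y ν lam m) Set.univ g) :
    lam * ‖f - g‖ ^ m ≤ 2 ^ (m - 2) * ν * ((y i - ⟪φ i, g⟫) ^ 2 - (y i - ⟪φ i, f⟫) ^ 2) := by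
  have hf_mid := isMinOn_univ_iff.1 hf ((1 / 2 : ℝ) • (f + g))
  have hg_mid := isMinOn_univ_iff.1 hg ((1 / 2 : ℝ) • (f + g))
  simp only [regularizedObjective] at hf_mid hg_mid
  have hclarkson := norm_half_smul_add_rpow_add_norm_half_smul_sub_rpow_le hm f g
  have hres := sqResidualSum_half_smul_add_le (s := s) (φ := φ) (y := y) f g
  have hres' := sqResidualSum_half_smul_add_le (s := s.erase i) (φ := φ) (y := y) f g
  rw [sqResidualSum_eq_add_sqResidualSum_erase hi f,
    sqResidualSum_eq_add_sqResidualSum_erase hi g,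
    sqResidualSum_eq_add_sqResidualSum_erase hi ((1 / 2 : ℝ) • (f + g))] at hres
  rw [sqResidualSum_eq_add_sqResidualSum_erase hi f,
    sqResidualSum_eq_add_sqResidualSum_erase hi ((1 / 2 : ℝ) • (f + g))] at hf_mid
  have hhalf : ‖(1 / 2 : ℝ) • (f - g)‖ ^ m = ‖f - g‖ ^ m / 2 ^ m := by
    rw [norm_smul, Real.norm_eq_abs, abs_of_pos one_half_pos, one_div_mul_eq_div,
      Real.div_rpow (norm_nonneg _) zero_le_two]
  have h2m : (2 : ℝ) ^ m = 2 ^ (m - 2) * 4 := by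
    rw [Real.rpow_sub zero_lt_two]; norm_num
  have key : 4 * lam * ‖(1 / 2 : ℝ) • (f - g)‖ ^ m ≤
      ν * ((y i - ⟪φ i, g⟫) ^ 2 - (y i - ⟪φ i, f⟫) ^ 2) := by
    linarith [mul_le_mul_of_nonneg_left hres hν, mul_le_mul_of_nonneg_left hres' hν,
      mul_le_mul_of_nonneg_left hclarkson hlam]
  rw [hhalf, h2m] at key
  calc lam * ‖f - g‖ ^ m
      = 2 ^ (m - 2) * (4 * lam * (‖f - g‖ ^ m / (2 ^ (m - 2) * 4))) := by field_simp
    _ ≤ 2 ^ (m - 2) * (ν * ((y i - ⟪φ i, g⟫) ^ 2 - (y i - ⟪φ i, f⟫) ^ 2)) := by gcongr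
    _ = _ := by ring

end Objective

lemma norm_le_of_isMinOn {H : Type*} [NormedAddCommGroup H] [InnerProductSpace ℝ H]
    {n : ℕ} {φ : Fin n → H} {y : Fin n → ℝ} {lam m Cy : ℝ} (s : Finset (Fin n))
    (hlam : 0 < lam) (hm : 0 < m) (hy : ∀ j, |y j| ≤ Cy) {f : H}
    (hf : IsMinOn (regularizedObjective s φ y (1 / n) lam m) Set.univ f) :
    ‖f‖ ≤ (Cy ^ 2 / lam) ^ (1 / m) :=
  le_rpow_one_div_of_mul_rpow_le (norm_nonneg f) hlam hm
    ((mul_rpow_norm_le_of_isMinOn (by positivity) hm.ne' hf).trans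
      (one_div_mul_sum_sq_le hy s))

theorem mPower_RLSR_minimizer_distance_bound_general
    {H : Type*} [NormedAddCommGroup H] [InnerProductSpace ℝ H]
    (n : ℕ) (φ : Fin n → H) (y : Fin n → ℝ)
    (lam m Cy κ : ℝ) (hlam : 0 < lam) (hm : 2 ≤ m)
    (hy : ∀ j, |y j| ≤ Cy) (hφ : ∀ j, ‖φ j‖ ≤ κ)
    (i : Fin n) (fZ fZi : H)
    (hfZ : ∀ g : H,
      (1 / (n : ℝ)) * ∑ j, (y j - ⟪φ j, fZ⟫) ^ 2 + lam * ‖fZ‖ ^ m ≤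
      (1 / (n : ℝ)) * ∑ j, (y j - ⟪φ j, g⟫) ^ 2 + lam * ‖g‖ ^ m)
    (hfZi : ∀ g : H,
      (1 / (n : ℝ)) * ∑ j ∈ Finset.univ.erase i, (y j - ⟪φ j, fZi⟫) ^ 2 + lam * ‖fZi‖ ^ m ≤
      (1 / (n : ℝ)) * ∑ j ∈ Finset.univ.erase i, (y j - ⟪φ j, g⟫) ^ 2 + lam * ‖g‖ ^ m)
    (C : ℝ) (hC : C = 2 * (Cy + κ * (Cy ^ 2 / lam) ^ (1 / m))) :
    ‖fZ - fZi‖ ≤ ((2 : ℝ) ^ (m - 2) * C * κ / (lam * n)) ^ (1 / (m - 1)) := by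
  have hn : (0 : ℝ) < n := Nat.cast_pos.2 i.pos
  have hκ : 0 ≤ κ := (norm_nonneg _).trans (hφ i)
  have hCy : 0 ≤ Cy := (abs_nonneg _).trans (hy i)
  have hfZ_min : IsMinOn (regularizedObjective Finset.univ φ y (1 / n) lam m) Set.univ fZ :=
    isMinOn_univ_iff.2 hfZ
  have hfZi_min :
      IsMinOn (regularizedObjective (Finset.univ.erase i) φ y (1 / n) lam m) Set.univ fZi :=
    isMinOn_univ_iff.2 hfZi
  have hfZ_norm := norm_le_of_isMinOn _ hlam (by linarith) hy hfZ_min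
  have hfZi_norm := norm_le_of_isMinOn _ hlam (by linarith) hy hfZi_min
  have hstab := mul_norm_sub_rpow_le_of_isMinOn (Finset.mem_univ i) (by positivity)
    hlam.le hm hfZ_min hfZi_min
  have hres := sq_sub_inner_sub_sq_sub_inner_le (hy i) (hφ i) hfZ_norm hfZi_norm
  rw [← hC] at hres
  refine le_rpow_one_div_sub_one_of_mul_rpow_le (norm_nonneg _) (by positivity) (by linarith)
    (by rw [hC]; positivity) ?_
  calc lam * n * ‖fZ - fZi‖ ^ m = n * (lam * ‖fZ - fZi‖ ^ m) := by ring
    _ ≤ n * (2 ^ (m - 2) * (1 / n) * ((y i - ⟪φ i, fZi⟫) ^ 2 - (y i - ⟪φ i, fZ⟫) ^ 2)) := by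
        gcongr
    _ = 2 ^ (m - 2) * ((y i - ⟪φ i, fZi⟫) ^ 2 - (y i - ⟪φ i, fZ⟫) ^ 2) := by field_simp
    _ ≤ 2 ^ (m - 2) * (C * κ * ‖fZ - fZi‖) := by gcongr
    _ = 2 ^ (m - 2) * C * κ * ‖fZ - fZi‖ := by ring

/-- With `m ≥ 2`, `|y j| ≤ C_y`, `‖φ j‖ ≤ κ`, and `C = 2·(C_y + κ·(C_y²/λ)^{1/m})`,
the minimizers on the full data and on the leave-one-out data satisfy
`‖fZ − fZi‖ ≤ (2^{m−2}·C·κ/(λ·n))^{1/(m−1)}`. -/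
theorem mPower_RLSR_minimizer_distance_bound
    {H : Type*} [NormedAddCommGroup H] [InnerProductSpace ℝ H] [CompleteSpace H]
    (n : ℕ) (hn : 0 < n) (φ : Fin n → H) (y : Fin n → ℝ)
    (lam m Cy κ : ℝ) (hlam : 0 < lam) (hm : 2 ≤ m) (hCy : 0 < Cy) (hκ : 0 < κ)
    (hy : ∀ j, |y j| ≤ Cy) (hφ : ∀ j, ‖φ j‖ ≤ κ)
    (i : Fin n) (fZ fZi : H)
    (hfZ : ∀ g : H,
      (1 / (n : ℝ)) * ∑ j, (y j - ⟪φ j, fZ⟫) ^ 2 + lam * ‖fZ‖ ^ m ≤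
      (1 / (n : ℝ)) * ∑ j, (y j - ⟪φ j, g⟫) ^ 2 + lam * ‖g‖ ^ m)
    (hfZi : ∀ g : H,
      (1 / (n : ℝ)) * ∑ j ∈ Finset.univ.erase i, (y j - ⟪φ j, fZi⟫) ^ 2 + lam * ‖fZi‖ ^ m ≤
      (1 / (n : ℝ)) * ∑ j ∈ Finset.univ.erase i, (y j - ⟪φ j, g⟫) ^ 2 + lam * ‖g‖ ^ m)
    (C : ℝ) (hC : C = 2 * (Cy + κ * (Cy ^ 2 / lam) ^ (1 / m))) :
    ‖fZ - fZi‖ ≤ ((2 : ℝ) ^ (m - 2) * C * κ / (lam * n)) ^ (1 / (m - 1)) :=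
  mPower_RLSR_minimizer_distance_bound_general n φ y lam m Cy κ hlam hm hy hφ i fZ fZi hfZ hfZi C hC
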